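/- arXiv:0809.4447 — 2 statements merged into one kernel-verified Lean document; each statement's English description precedes it below -/
import Mathlib

section
/- Let A ⊆ H × H be a monotone set and define the Fitzpatrick function H_A(x, x*) = sup_{(u,u*)∈A} (⟨u, x*⟩ + ⟨x, u*⟩ − ⟨u, u*⟩). If (x, x*) ∈ A, then the pair (x*, x) belongs to the subdifferential of H_A at (x, x*); that is, for all (z, z*) ∈ H × H, ⟨x*, z − x⟩ + ⟨x, z* − x*⟩ + H_A(x, x*) ≤ H_A(z, z*). -/
/-!
Monotonicity against `(x, x*) ∈ A` bounds every term of the supremum defining `H_A(x, x*)` by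
`⟨x, x*⟩`, and the term `u = (x, x*)` attains it, so `H_A(x, x*) = ⟨x, x*⟩`. The subgradient
inequality at `(z, z*)` is then exactly the term `u = (x, x*)` of the supremum defining `H_A(z, z*)`.
-/

section Fitzpatrick

open RealInnerProductSpace

variable {H : Type*} [NormedAddCommGroup H] [InnerProductSpace ℝ H]

noncomputable def fitzpatrick (A : Set (H × H)) (x xs : H) : EReal :=
  ⨆ u ∈ A, ((⟪u.1, xs⟫ + ⟪x, u.2⟫ - ⟪u.1, u.2⟫ : ℝ) : EReal)

variable {A : Set (H × H)}

lemma le_fitzpatrick_of_mem {u : H × H} (hu : u ∈ A) (x xs : H) :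
    ((⟪u.1, xs⟫ + ⟪x, u.2⟫ - ⟪u.1, u.2⟫ : ℝ) : EReal) ≤ fitzpatrick A x xs :=
  le_iSup₂ (f := fun u (_ : u ∈ A) => ((⟪u.1, xs⟫ + ⟪x, u.2⟫ - ⟪u.1, u.2⟫ : ℝ) : EReal)) u hu

lemma fitzpatrick_le_inner {x xs : H} (hmono : ∀ u ∈ A, 0 ≤ ⟪x - u.1, xs - u.2⟫) :
    fitzpatrick A x xs ≤ (⟪x, xs⟫ : EReal) := by
  refine iSup₂_le fun u hu => EReal.coe_le_coe_iff.mpr ?_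
  have h := hmono u hu
  rw [inner_sub_left, inner_sub_right, inner_sub_right] at h
  linarith

lemma fitzpatrick_eq_inner_of_mem {x xs : H} (hx : (x, xs) ∈ A)
    (hmono : ∀ u ∈ A, 0 ≤ ⟪x - u.1, xs - u.2⟫) :
    fitzpatrick A x xs = (⟪x, xs⟫ : EReal) := by
  refine le_antisymm (fitzpatrick_le_inner hmono) ?_
  simpa using le_fitzpatrick_of_mem hx x xs

end Fitzpatrick

/-- If `(x, x*) ∈ A` for a monotone set `A`, then `(x*, x)` is a subgradient of the
Fitzpatrick function of `A` at `(x, x*)`. -/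
theorem mem_subdifferential_fitzpatrick_of_mem
    {H : Type*} [NormedAddCommGroup H] [InnerProductSpace ℝ H]
    (A : Set (H × H))
    (hmono : ∀ p ∈ A, ∀ q ∈ A, (0 : ℝ) ≤ inner ℝ (p.1 - q.1) (p.2 - q.2))
    (x xs : H) (hx : (x, xs) ∈ A) :
    ∀ z zs : H,
      (((inner ℝ xs (z - x) + inner ℝ x (zs - xs) : ℝ)) : EReal)
          + (⨆ u ∈ A, (((inner ℝ u.1 xs + inner ℝ x u.2 - inner ℝ u.1 u.2 : ℝ)) : EReal))
        ≤ ⨆ u ∈ A, (((inner ℝ u.1 zs + inner ℝ z u.2 - inner ℝ u.1 u.2 : ℝ)) : EReal) := by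
  intro z zs
  change _ + fitzpatrick A x xs ≤ fitzpatrick A z zs
  rw [fitzpatrick_eq_inner_of_mem hx (hmono _ hx), ← EReal.coe_add]
  refine le_trans (EReal.coe_le_coe_iff.mpr (le_of_eq ?_)) (le_fitzpatrick_of_mem hx z zs)
  rw [inner_sub_right, inner_sub_right, real_inner_comm xs z, real_inner_comm xs x]
  ring
end

section
/- Let φ : ℝ^d → ℝ ∪ {+∞} be proper convex l.s.c., let x ∈ C([0,T]; ℝ^d) and k ∈ BV([0,T]; ℝ^d) with k(0)=0, and suppose t ↦ φ(x(t)) ∈ L¹(0,T). Then the following are equivalent: (a) for every continuous y : [0,T] → ℝ^d and all 0 ≤ s ≤ t ≤ T, ∫_s^t ⟨y(r) − x(r), dk(r)⟩ + ∫_s^t φ(x(r)) dr ≤ ∫_s^t φ(y(r)) dr; (b) for every z ∈ ℝ^d and all 0 ≤ s ≤ t ≤ T, ∫_s^t ⟨z − x(r), dk(r)⟩ + ∫_s^t φ(x(r)) dr ≤ (t − s) φ(z). -/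
open MeasureTheory Classical

/-- `I` is the Riemann–Stieltjes integral `∫_s^t ⟨f(r), dk(r)⟩`, computed as the limit
of left-endpoint Riemann–Stieltjes sums along partitions of `[s,t]` of small mesh. -/
def IsRSIntegral {H : Type*} [NormedAddCommGroup H] [InnerProductSpace ℝ H]
    (f k : ℝ → H) (s t : ℝ) (I : ℝ) : Prop :=
  ∀ ε > (0 : ℝ), ∃ δ > (0 : ℝ), ∀ n : ℕ, ∀ p : ℕ → ℝ,
    p 0 = s → p n = t → (∀ i < n, p i ≤ p (i + 1)) → (∀ i < n, p (i + 1) - p i < δ) →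
    |(∑ i ∈ Finset.range n, (inner ℝ (f (p i)) (k (p (i + 1)) - k (p i)) : ℝ)) - I| < ε

/-- The integral `∫_s^t f(r) dr` of an `ℝ ∪ {+∞}`-valued function, equal to `+∞`
whenever `f` is not finite and integrable on `[s,t]`. -/

noncomputable def ERealIntegral (f : ℝ → EReal) (s t : ℝ) : EReal :=
  if (∀ r ∈ Set.Icc s t, f r ≠ ⊤) ∧ IntegrableOn (fun r => (f r).toReal) (Set.Icc s t)
  then (((∫ r in s..t, (f r).toReal) : ℝ) : EReal) else ⊤

/-!
(a) ⇒ (b) is the case of constant `y`. For (b) ⇒ (a), both sides of (a) are additive over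
adjacent subintervals of `[s, t]`, as is `ε · Var(k)`, so it suffices to prove (a) up to
`ε · Var(k, [a, b])` on every short interval `[a, b]`. There we compare `y` with its mean `z`:
Jensen's inequality for the convex l.s.c. `φ` gives `(b - a) φ(z) ≤ ∫_a^b φ(y)`, (b) applies to
`z`, and since `y` oscillates by at most `ε` on `[a, b]`, the integrals `∫ ⟨z - x, dk⟩` and
`∫ ⟨y - x, dk⟩` differ by at most `ε · Var(k, [a, b])`. The Riemann–Stieltjes integrals involved
exist because continuous integrands against `BV` integrators have Cauchy Riemann–Stieltjes sums,
by comparison through a common refinement.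
-/

open Set

theorem monotoneOn_Iic_of_le_succ {α : Type*} [Preorder α] {f : ℕ → α} {n : ℕ}
    (h : ∀ i < n, f i ≤ f (i + 1)) : MonotoneOn f (Iic n) :=
  monotoneOn_of_le_add_one ordConnected_Iic fun i _ _ hi => h i (Nat.lt_of_succ_le hi)

theorem Finset.sum_range_sum_Ico_consecutive {M : Type*} [AddCommMonoid M] (h : ℕ → M)
    {σ : ℕ → ℕ} {n : ℕ} (hσ : ∀ i < n, σ i ≤ σ (i + 1)) :
    ∑ i ∈ range n, ∑ l ∈ Ico (σ i) (σ (i + 1)), h l = ∑ l ∈ Ico (σ 0) (σ n), h l := by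
  induction n with
  | zero => simp
  | succ n ih =>
    rw [sum_range_succ, ih fun i hi => hσ i (hi.trans n.lt_succ_self)]
    exact sum_Ico_consecutive h ((monotoneOn_Iic_of_le_succ hσ) (Nat.zero_le _) n.le_succ
      (Nat.zero_le n)) (hσ n n.lt_succ_self)

structure IsPartition (p : ℕ → ℝ) (n : ℕ) (a b : ℝ) : Prop where
  zero : p 0 = a
  last : p n = b
  mono : ∀ i < n, p i ≤ p (i + 1)

namespace IsPartition

variable {p : ℕ → ℝ} {n : ℕ} {a b : ℝ}

theorem monotoneOn (hp : IsPartition p n a b) : MonotoneOn p (Iic n) :=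
  monotoneOn_Iic_of_le_succ hp.mono

theorem mem_Icc (hp : IsPartition p n a b) {i : ℕ} (hi : i ≤ n) : p i ∈ Icc a b :=
  ⟨hp.zero ▸ hp.monotoneOn (Nat.zero_le n) hi (Nat.zero_le i),
    hp.last ▸ hp.monotoneOn hi (mem_Iic.2 le_rfl) hi⟩

theorem sum_norm_sub_le_eVariationOn {E : Type*} [NormedAddCommGroup E] {k : ℝ → E}
    (hp : IsPartition p n a b) (hk : BoundedVariationOn k (Icc a b)) :
    ∑ i ∈ Finset.range n, ‖k (p (i + 1)) - k (p i)‖ ≤ (eVariationOn k (Icc a b)).toReal := by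
  have h := eVariationOn.sum_le_of_monotoneOn_Iic (f := k) hp.monotoneOn fun i hi => hp.mem_Icc hi
  rw [← ENNReal.toReal_le_toReal (ne_top_of_le_ne_top hk h) hk,
    ENNReal.toReal_sum fun _ _ => edist_ne_top _ _] at h
  simpa only [← dist_edist, dist_eq_norm] using h

end IsPartition

noncomputable def uniformPartition (a b : ℝ) (n : ℕ) (i : ℕ) : ℝ := a + i * ((b - a) / (n + 1))

theorem uniformPartition_succ_sub (a b : ℝ) (n i : ℕ) :
    uniformPartition a b n (i + 1) - uniformPartition a b n i = (b - a) / (n + 1) := by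
  simp only [uniformPartition]; push_cast; ring

theorem isPartition_uniformPartition {a b : ℝ} (hab : a ≤ b) (n : ℕ) :
    IsPartition (uniformPartition a b n) (n + 1) a b where
  zero := by simp [uniformPartition]
  last := by
    have : (n : ℝ) + 1 ≠ 0 := by positivity
    rw [uniformPartition]; push_cast; field_simp; ring
  mono i _ := sub_nonneg.1 <| (uniformPartition_succ_sub a b n i).symm ▸ by
    have := sub_nonneg.2 hab; positivity

theorem eventually_uniformPartition_mesh_lt (a b : ℝ) {δ : ℝ} (hδ : 0 < δ) :
    ∀ᶠ n : ℕ in Filter.atTop, ∀ i,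
      uniformPartition a b n (i + 1) - uniformPartition a b n i < δ := by
  have h : Filter.Tendsto (fun n : ℕ => (b - a) * (1 / ((n : ℝ) + 1))) Filter.atTop (nhds 0) := by
    simpa only [mul_zero] using tendsto_one_div_add_atTop_nhds_zero_nat.const_mul (b - a)
  filter_upwards [h.eventually (gt_mem_nhds hδ)] with n hn i
  rwa [uniformPartition_succ_sub, div_eq_mul_one_div]

theorem exists_isPartition_mesh_lt {a b δ : ℝ} (hab : a ≤ b) (hδ : 0 < δ) :
    ∃ n p, IsPartition p n a b ∧ ∀ i < n, p (i + 1) - p i < δ :=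
  let ⟨n, hn⟩ := (eventually_uniformPartition_mesh_lt a b hδ).exists
  ⟨n + 1, _, isPartition_uniformPartition hab n, fun i _ => hn i⟩

-- `σ i` is the index in `r` of the `i`-th point of `p`.
structure IsRefinement (σ : ℕ → ℕ) (p : ℕ → ℝ) (n : ℕ) (r : ℕ → ℝ) (N : ℕ) : Prop where
  zero : σ 0 = 0
  last : σ n = N
  mono : ∀ i < n, σ i ≤ σ (i + 1)
  comp : ∀ i ≤ n, r (σ i) = p i

noncomputable def sortedSeq (S : Finset ℝ) (l : ℕ) : ℝ :=
  if h : l < S.card then S.orderEmbOfFin rfl ⟨l, h⟩ else 0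

section SortedSeq

variable {S : Finset ℝ} {a b : ℝ}

theorem sortedSeq_of_lt {l : ℕ} (h : l < S.card) : sortedSeq S l = S.orderEmbOfFin rfl ⟨l, h⟩ :=
  dif_pos h

theorem sortedSeq_zero (hS : ↑S ⊆ Icc a b) (ha : a ∈ S) : sortedSeq S 0 = a := by
  have h0 : 0 < S.card := Finset.card_pos.2 ⟨a, ha⟩
  rw [sortedSeq_of_lt h0, Finset.orderEmbOfFin_zero rfl h0]
  exact le_antisymm (S.min'_le a ha) (hS (S.min'_mem _)).1

theorem sortedSeq_last (hS : ↑S ⊆ Icc a b) (hb : b ∈ S) : sortedSeq S (S.card - 1) = b := by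
  have h0 : 0 < S.card := Finset.card_pos.2 ⟨b, hb⟩
  rw [sortedSeq_of_lt (Nat.sub_lt h0 one_pos), Finset.orderEmbOfFin_last rfl h0]
  exact le_antisymm (hS (S.max'_mem _)).2 (S.le_max' b hb)

theorem isPartition_sortedSeq (hS : ↑S ⊆ Icc a b) (ha : a ∈ S) (hb : b ∈ S) :
    IsPartition (sortedSeq S) (S.card - 1) a b where
  zero := sortedSeq_zero hS ha
  last := sortedSeq_last hS hb
  mono l hl := by
    rw [sortedSeq_of_lt (by omega), sortedSeq_of_lt (by omega)]
    exact (S.orderEmbOfFin rfl).monotone (Fin.mk_le_mk.2 l.le_succ)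

theorem exists_isRefinement_sortedSeq (hS : ↑S ⊆ Icc a b) {p : ℕ → ℝ} {n : ℕ}
    (hp : IsPartition p n a b) (hpS : ∀ i ≤ n, p i ∈ S) :
    ∃ σ, IsRefinement σ p n (sortedSeq S) (S.card - 1) := by
  set e := S.orderIsoOfFin rfl
  let σ : ℕ → ℕ := fun i => if h : p i ∈ S then e.symm ⟨p i, h⟩ else 0
  have hσ : ∀ i (hi : i ≤ n), σ i = e.symm ⟨p i, hpS i hi⟩ := fun i hi => dif_pos (hpS i hi)
  have hcomp : ∀ i ≤ n, sortedSeq S (σ i) = p i := fun i hi => by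
    rw [hσ i hi, sortedSeq_of_lt (Fin.isLt _), ← S.coe_orderIsoOfFin_apply rfl, e.apply_symm_apply]
  have hσ_eq : ∀ i ≤ n, ∀ j (hj : j < S.card), sortedSeq S j = p i → σ i = j := by
    intro i hi j hj hij
    have : e.symm ⟨p i, hpS i hi⟩ = ⟨j, hj⟩ := e.symm_apply_eq.2 <| Subtype.ext <| by
      rw [S.coe_orderIsoOfFin_apply, ← sortedSeq_of_lt hj, hij]
    rw [hσ i hi, this]
  have ha : a ∈ S := hp.zero ▸ hpS 0 (Nat.zero_le n)
  have hb : b ∈ S := hp.last ▸ hpS n le_rfl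
  have h0 : 0 < S.card := Finset.card_pos.2 ⟨a, ha⟩
  refine ⟨σ, ⟨?_, ?_, fun i hi => ?_, hcomp⟩⟩
  · exact hσ_eq 0 (Nat.zero_le n) 0 h0 (by rw [sortedSeq_zero hS ha, hp.zero])
  · exact hσ_eq n le_rfl _ (Nat.sub_lt h0 one_pos) (by rw [sortedSeq_last hS hb, hp.last])
  · rw [hσ i hi.le, hσ (i + 1) hi]
    exact e.symm.monotone (Subtype.mk_le_mk.2 (hp.mono i hi))

end SortedSeq

theorem IsPartition.exists_common_refinement {p q : ℕ → ℝ} {n m : ℕ} {a b : ℝ}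
    (hp : IsPartition p n a b) (hq : IsPartition q m a b) :
    ∃ N r σ τ, IsPartition r N a b ∧ IsRefinement σ p n r N ∧ IsRefinement τ q m r N := by
  set S := (Finset.range (n + 1)).image p ∪ (Finset.range (m + 1)).image q
  have hpS : ∀ i ≤ n, p i ∈ S := fun i hi =>
    Finset.mem_union_left _ (Finset.mem_image_of_mem p (Finset.mem_range_succ_iff.2 hi))
  have hqS : ∀ j ≤ m, q j ∈ S := fun j hj =>
    Finset.mem_union_right _ (Finset.mem_image_of_mem q (Finset.mem_range_succ_iff.2 hj))
  have hS : ↑S ⊆ Icc a b := by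
    intro u hu
    simp only [S, Finset.coe_union, Finset.coe_image, Finset.coe_range, mem_union, mem_image,
      mem_Iio, Nat.lt_succ_iff] at hu
    rcases hu with ⟨i, hi, rfl⟩ | ⟨j, hj, rfl⟩
    exacts [hp.mem_Icc hi, hq.mem_Icc hj]
  obtain ⟨σ, hσ⟩ := exists_isRefinement_sortedSeq hS hp hpS
  obtain ⟨τ, hτ⟩ := exists_isRefinement_sortedSeq hS hq hqS
  exact ⟨_, _, σ, τ, isPartition_sortedSeq hS (hp.zero ▸ hpS 0 (Nat.zero_le n))
    (hp.last ▸ hpS n le_rfl), hσ, hτ⟩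

noncomputable def seqAppend (p q : ℕ → ℝ) (n : ℕ) (l : ℕ) : ℝ := if l ≤ n then p l else q (l - n)

section SeqAppend

variable {p q : ℕ → ℝ} {n m : ℕ} {a b c : ℝ}

theorem seqAppend_of_le {l : ℕ} (hl : l ≤ n) : seqAppend p q n l = p l := if_pos hl

theorem seqAppend_add (h : p n = q 0) (j : ℕ) : seqAppend p q n (n + j) = q j := by
  rcases j.eq_zero_or_pos with rfl | hj
  · rw [add_zero, seqAppend_of_le le_rfl, h]
  · rw [seqAppend, if_neg (by omega), Nat.add_sub_cancel_left]

theorem IsPartition.append (hp : IsPartition p n a b) (hq : IsPartition q m b c) :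
    IsPartition (seqAppend p q n) (n + m) a c where
  zero := by rw [seqAppend_of_le (Nat.zero_le n), hp.zero]
  last := by rw [seqAppend_add (hp.last.trans hq.zero.symm), hq.last]
  mono l hl := by
    rcases lt_or_ge l n with hln | hln
    · rw [seqAppend_of_le hln.le, seqAppend_of_le hln]
      exact hp.mono l hln
    · obtain ⟨j, rfl⟩ := Nat.exists_eq_add_of_le hln
      rw [add_assoc, seqAppend_add (hp.last.trans hq.zero.symm),
        seqAppend_add (hp.last.trans hq.zero.symm)]
      exact hq.mono j (by omega)

theorem seqAppend_mesh_lt {δ : ℝ} (hpq : p n = q 0) (hpδ : ∀ i < n, p (i + 1) - p i < δ)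
    (hqδ : ∀ i < m, q (i + 1) - q i < δ) :
    ∀ l < n + m, seqAppend p q n (l + 1) - seqAppend p q n l < δ := by
  intro l hl
  rcases lt_or_ge l n with hln | hln
  · rw [seqAppend_of_le hln.le, seqAppend_of_le hln]
    exact hpδ l hln
  · obtain ⟨j, rfl⟩ := Nat.exists_eq_add_of_le hln
    rw [add_assoc, seqAppend_add hpq, seqAppend_add hpq]
    exact hqδ j (by omega)

end SeqAppend

section RiemannStieltjes

variable {H : Type*} [NormedAddCommGroup H] [InnerProductSpace ℝ H]
  {f g k : ℝ → H} {a b c δ ω I J : ℝ} {p q r : ℕ → ℝ} {n m N : ℕ}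

noncomputable def rsSum (f k : ℝ → H) (p : ℕ → ℝ) (n : ℕ) : ℝ :=
  ∑ i ∈ Finset.range n, inner ℝ (f (p i)) (k (p (i + 1)) - k (p i))

theorem isRSIntegral_iff :
    IsRSIntegral f k a b I ↔ ∀ ε > 0, ∃ δ > 0, ∀ n p, IsPartition p n a b →
      (∀ i < n, p (i + 1) - p i < δ) → |rsSum f k p n - I| < ε :=
  ⟨fun h ε hε => let ⟨δ, hδ, h⟩ := h ε hε; ⟨δ, hδ, fun n p hp => h n p hp.zero hp.last hp.mono⟩,
    fun h ε hε => let ⟨δ, hδ, h⟩ := h ε hε; ⟨δ, hδ, fun n p h0 hn hm => h n p ⟨h0, hn, hm⟩⟩⟩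

theorem IsRefinement.abs_rsSum_sub_rsSum_le {σ : ℕ → ℕ} (hσ : IsRefinement σ p n r N)
    (hfg : ∀ i < n, ∀ l ∈ Finset.Ico (σ i) (σ (i + 1)), ‖f (p i) - g (r l)‖ ≤ ω) :
    |rsSum f k p n - rsSum g k r N| ≤ ω * ∑ l ∈ Finset.range N, ‖k (r (l + 1)) - k (r l)‖ := by
  have hgroup (h : ℕ → ℝ) : ∑ i ∈ Finset.range n, ∑ l ∈ Finset.Ico (σ i) (σ (i + 1)), h l
      = ∑ l ∈ Finset.range N, h l := by
    rw [Finset.sum_range_sum_Ico_consecutive h hσ.mono, hσ.zero, hσ.last, Finset.range_eq_Ico]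
  have hdiff : rsSum f k p n - rsSum g k r N = ∑ i ∈ Finset.range n,
      ∑ l ∈ Finset.Ico (σ i) (σ (i + 1)),
        inner ℝ (f (p i) - g (r l)) (k (r (l + 1)) - k (r l)) := by
    simp_rw [inner_sub_left, Finset.sum_sub_distrib]
    rw [hgroup, rsSum, rsSum]
    congr 1
    refine Finset.sum_congr rfl fun i hi => ?_
    have hi := Finset.mem_range.1 hi
    rw [← inner_sum, Finset.sum_Ico_sub (fun l => k (r l)) (hσ.mono i hi), hσ.comp i hi.le,
      hσ.comp (i + 1) hi]
  rw [hdiff, Finset.mul_sum, ← hgroup]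
  refine (Finset.abs_sum_le_sum_abs _ _).trans <| Finset.sum_le_sum fun i hi =>
    (Finset.abs_sum_le_sum_abs _ _).trans <| Finset.sum_le_sum fun l hl => ?_
  exact (abs_real_inner_le_norm _ _).trans
    (mul_le_mul_of_nonneg_right (hfg i (Finset.mem_range.1 hi) l hl) (norm_nonneg _))

theorem IsRefinement.abs_rsSum_sub_rsSum_le_of_mesh_lt {σ : ℕ → ℕ} (hσ : IsRefinement σ p n r N)
    (hp : IsPartition p n a b) (hpδ : ∀ i < n, p (i + 1) - p i < δ) (hr : IsPartition r N a b)
    (hk : BoundedVariationOn k (Icc a b)) (hω : 0 ≤ ω)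
    (hf : ∀ u ∈ Icc a b, ∀ v ∈ Icc a b, |u - v| < δ → ‖f u - f v‖ ≤ ω) :
    |rsSum f k p n - rsSum f k r N| ≤ ω * (eVariationOn k (Icc a b)).toReal := by
  refine (hσ.abs_rsSum_sub_rsSum_le fun i hi l hl => ?_).trans
    (mul_le_mul_of_nonneg_left (hr.sum_norm_sub_le_eVariationOn hk) hω)
  obtain ⟨hil, hli⟩ := Finset.mem_Ico.1 hl
  have hσN : σ (i + 1) ≤ N :=
    hσ.last ▸ monotoneOn_Iic_of_le_succ hσ.mono (mem_Iic.2 hi) (mem_Iic.2 le_rfl) hi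
  have h₁ : p i ≤ r l := hσ.comp i hi.le ▸ hr.monotoneOn (hil.trans hli.le |>.trans hσN)
    (hli.le.trans hσN) hil
  have h₂ : r l ≤ p (i + 1) := hσ.comp (i + 1) hi ▸ hr.monotoneOn (hli.le.trans hσN) hσN hli.le
  refine hf _ (hp.mem_Icc hi.le) _ (hr.mem_Icc (hli.le.trans hσN)) ?_
  rw [abs_sub_comm, abs_of_nonneg (sub_nonneg.2 h₁)]
  linarith [hpδ i hi]

theorem abs_rsSum_sub_rsSum_le_of_mesh_lt (hk : BoundedVariationOn k (Icc a b)) (hω : 0 ≤ ω)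
    (hf : ∀ u ∈ Icc a b, ∀ v ∈ Icc a b, |u - v| < δ → ‖f u - f v‖ ≤ ω)
    (hp : IsPartition p n a b) (hpδ : ∀ i < n, p (i + 1) - p i < δ)
    (hq : IsPartition q m a b) (hqδ : ∀ i < m, q (i + 1) - q i < δ) :
    |rsSum f k p n - rsSum f k q m| ≤ 2 * ω * (eVariationOn k (Icc a b)).toReal := by
  obtain ⟨N, r, σ, τ, hr, hσ, hτ⟩ := hp.exists_common_refinement hq
  have h₁ := hσ.abs_rsSum_sub_rsSum_le_of_mesh_lt hp hpδ hr hk hω hf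
  have h₂ := hτ.abs_rsSum_sub_rsSum_le_of_mesh_lt hq hqδ hr hk hω hf
  rw [abs_sub_comm] at h₂
  linarith [abs_sub_le (rsSum f k p n) (rsSum f k r N) (rsSum f k q m)]

theorem exists_isRSIntegral_of_cauchy (hab : a ≤ b)
    (h : ∀ ε > 0, ∃ δ > 0, ∀ n p m q, IsPartition p n a b → (∀ i < n, p (i + 1) - p i < δ) →
      IsPartition q m a b → (∀ i < m, q (i + 1) - q i < δ) →
      |rsSum f k p n - rsSum f k q m| ≤ ε) :
    ∃ I, IsRSIntegral f k a b I := by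
  set u : ℕ → ℝ := fun j => rsSum f k (uniformPartition a b j) (j + 1)
  have hclose : ∀ ε > 0, ∃ δ > 0, ∃ M, ∀ n p, IsPartition p n a b →
      (∀ i < n, p (i + 1) - p i < δ) → ∀ j ≥ M, |rsSum f k p n - u j| ≤ ε := by
    intro ε hε
    obtain ⟨δ, hδ, hpq⟩ := h ε hε
    obtain ⟨M, hM⟩ := Filter.eventually_atTop.1 (eventually_uniformPartition_mesh_lt a b hδ)
    exact ⟨δ, hδ, M, fun n p hp hpδ j hj =>
      hpq n p _ _ hp hpδ (isPartition_uniformPartition hab j) fun i _ => hM j hj i⟩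
  have hu : CauchySeq u := by
    refine Metric.cauchySeq_iff'.2 fun ε hε => ?_
    obtain ⟨δ, hδ, M, hM⟩ := hclose (ε / 2) (half_pos hε)
    obtain ⟨M', hM'⟩ := Filter.eventually_atTop.1 (eventually_uniformPartition_mesh_lt a b hδ)
    refine ⟨max M M', fun j hj => ?_⟩
    have := hM _ _ (isPartition_uniformPartition hab j) (fun i _ => hM' j (le_of_max_le_right hj) i)
      (max M M') (le_max_left _ _)
    rw [Real.dist_eq]
    linarith
  obtain ⟨I, hI⟩ := cauchySeq_tendsto_of_complete hu
  refine ⟨I, isRSIntegral_iff.2 fun ε hε => ?_⟩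
  obtain ⟨δ, hδ, M, hM⟩ := hclose (ε / 2) (half_pos hε)
  refine ⟨δ, hδ, fun n p hp hpδ => ?_⟩
  have : |rsSum f k p n - I| ≤ ε / 2 :=
    le_of_tendsto ((tendsto_const_nhds.sub hI).abs) (Filter.eventually_atTop.2 ⟨M, hM n p hp hpδ⟩)
  linarith

theorem exists_isRSIntegral (hab : a ≤ b) (hf : ContinuousOn f (Icc a b))
    (hk : BoundedVariationOn k (Icc a b)) : ∃ I, IsRSIntegral f k a b I := by
  set V := (eVariationOn k (Icc a b)).toReal
  refine exists_isRSIntegral_of_cauchy hab fun ε hε => ?_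
  have hω : 0 < ε / (2 * (V + 1)) := by positivity
  obtain ⟨δ, hδ, hfδ⟩ :=
    Metric.uniformContinuousOn_iff.1 (isCompact_Icc.uniformContinuousOn_of_continuous hf) _ hω
  refine ⟨δ, hδ, fun n p m q hp hpδ hq hqδ => ?_⟩
  refine (abs_rsSum_sub_rsSum_le_of_mesh_lt hk hω.le (fun u hu v hv huv => ?_)
    hp hpδ hq hqδ).trans ?_
  · rw [← dist_eq_norm]
    exact (hfδ u hu v hv (by rwa [Real.dist_eq])).le
  · rw [mul_div_assoc', div_mul_eq_mul_div, div_le_iff₀ (by positivity)]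
    nlinarith [ENNReal.toReal_nonneg (a := eVariationOn k (Icc a b))]

theorem IsRSIntegral.unique (hab : a ≤ b) (hI : IsRSIntegral f k a b I)
    (hJ : IsRSIntegral f k a b J) : I = J := by
  refine eq_of_forall_dist_le fun ε hε => ?_
  obtain ⟨δ₁, hδ₁, hI⟩ := isRSIntegral_iff.1 hI (ε / 2) (half_pos hε)
  obtain ⟨δ₂, hδ₂, hJ⟩ := isRSIntegral_iff.1 hJ (ε / 2) (half_pos hε)
  obtain ⟨n, p, hp, hpδ⟩ := exists_isPartition_mesh_lt hab (lt_min hδ₁ hδ₂)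
  have h₁ := hI n p hp fun i hi => (hpδ i hi).trans_le (min_le_left _ _)
  have h₂ := hJ n p hp fun i hi => (hpδ i hi).trans_le (min_le_right _ _)
  rw [abs_sub_comm] at h₁
  rw [Real.dist_eq]
  linarith [abs_sub_le I (rsSum f k p n) J]

theorem IsRSIntegral.eq_zero_of_self (hI : IsRSIntegral f k a a I) : I = 0 := by
  by_contra h
  obtain ⟨δ, -, hδ⟩ := isRSIntegral_iff.1 hI |I| (abs_pos.2 h)
  simpa [rsSum] using hδ 0 (fun _ => a) ⟨rfl, rfl, by simp⟩ (by simp)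

theorem rsSum_seqAppend (h : p n = q 0) :
    rsSum f k (seqAppend p q n) (n + m) = rsSum f k p n + rsSum f k q m := by
  rw [rsSum, rsSum, rsSum, Finset.sum_range_add]
  congr 1
  · refine Finset.sum_congr rfl fun i hi => ?_
    rw [seqAppend_of_le (Finset.mem_range.1 hi).le, seqAppend_of_le (Finset.mem_range.1 hi)]
  · refine Finset.sum_congr rfl fun j _ => ?_
    rw [add_assoc, seqAppend_add h, seqAppend_add h]

theorem IsRSIntegral.eq_add_of_adjacent (hab : a ≤ b) (hbc : b ≤ c)
    (h₁ : IsRSIntegral f k a b I) (h₂ : IsRSIntegral f k b c J) {K : ℝ}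
    (h : IsRSIntegral f k a c K) : K = I + J := by
  refine eq_of_forall_dist_le fun ε hε => ?_
  obtain ⟨δ₁, hδ₁, h₁⟩ := isRSIntegral_iff.1 h₁ (ε / 3) (by positivity)
  obtain ⟨δ₂, hδ₂, h₂⟩ := isRSIntegral_iff.1 h₂ (ε / 3) (by positivity)
  obtain ⟨δ, hδ, h⟩ := isRSIntegral_iff.1 h (ε / 3) (by positivity)
  have hδ' : 0 < min δ (min δ₁ δ₂) := lt_min hδ (lt_min hδ₁ hδ₂)
  obtain ⟨n, p, hp, hpδ⟩ := exists_isPartition_mesh_lt hab hδ'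
  obtain ⟨m, q, hq, hqδ⟩ := exists_isPartition_mesh_lt hbc hδ'
  have hpq : p n = q 0 := hp.last.trans hq.zero.symm
  have e₁ := h₁ n p hp fun i hi => (hpδ i hi).trans_le ((min_le_right _ _).trans (min_le_left _ _))
  have e₂ := h₂ m q hq fun i hi => (hqδ i hi).trans_le ((min_le_right _ _).trans (min_le_right _ _))
  have e := h _ _ (hp.append hq) fun l hl =>
    (seqAppend_mesh_lt hpq hpδ hqδ l hl).trans_le (min_le_left _ _)
  rw [rsSum_seqAppend hpq] at e
  rw [Real.dist_eq, abs_le]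
  constructor <;> linarith [abs_lt.1 e, abs_lt.1 e₁, abs_lt.1 e₂]

theorem IsRSIntegral.abs_sub_le (hab : a ≤ b) (hk : BoundedVariationOn k (Icc a b))
    (hfg : ∀ u ∈ Icc a b, ‖f u - g u‖ ≤ c)
    (hI : IsRSIntegral f k a b I) (hJ : IsRSIntegral g k a b J) :
    |I - J| ≤ c * (eVariationOn k (Icc a b)).toReal := by
  refine le_of_forall_pos_le_add fun ε hε => ?_
  obtain ⟨δ₁, hδ₁, hI⟩ := isRSIntegral_iff.1 hI (ε / 2) (half_pos hε)
  obtain ⟨δ₂, hδ₂, hJ⟩ := isRSIntegral_iff.1 hJ (ε / 2) (half_pos hε)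
  obtain ⟨n, p, hp, hpδ⟩ := exists_isPartition_mesh_lt hab (lt_min hδ₁ hδ₂)
  have h₁ := hI n p hp fun i hi => (hpδ i hi).trans_le (min_le_left _ _)
  have h₂ := hJ n p hp fun i hi => (hpδ i hi).trans_le (min_le_right _ _)
  have hid : IsRefinement id p n p n := ⟨rfl, rfl, fun i _ => i.le_succ, fun _ _ => rfl⟩
  have hc : 0 ≤ c := (norm_nonneg _).trans (hfg a ⟨le_rfl, hab⟩)
  have h₃ : |rsSum f k p n - rsSum g k p n| ≤ c * (eVariationOn k (Icc a b)).toReal := by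
    refine (hid.abs_rsSum_sub_rsSum_le fun i hi l hl => ?_).trans
      (mul_le_mul_of_nonneg_left (hp.sum_norm_sub_le_eVariationOn hk) hc)
    obtain rfl : l = i := by simp only [id, Finset.mem_Ico] at hl; omega
    exact hfg _ (hp.mem_Icc hi.le)
  rw [abs_le] at h₃ ⊢
  constructor <;> linarith [abs_lt.1 h₁, abs_lt.1 h₂]

-- An arbitrary real when the limit does not exist.
noncomputable def rsIntegral (f k : ℝ → H) (a b : ℝ) : ℝ := Classical.epsilon (IsRSIntegral f k a b)

theorem isRSIntegral_rsIntegral (hab : a ≤ b) (hf : ContinuousOn f (Icc a b))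
    (hk : BoundedVariationOn k (Icc a b)) : IsRSIntegral f k a b (rsIntegral f k a b) :=
  Classical.epsilon_spec (exists_isRSIntegral hab hf hk)

theorem rsIntegral_add_adjacent_intervals (hab : a ≤ b) (hbc : b ≤ c)
    (hf : ContinuousOn f (Icc a c)) (hk : BoundedVariationOn k (Icc a c)) :
    rsIntegral f k a b + rsIntegral f k b c = rsIntegral f k a c := by
  have hsub₁ : Icc a b ⊆ Icc a c := Icc_subset_Icc_right hbc
  have hsub₂ : Icc b c ⊆ Icc a c := Icc_subset_Icc_left hab
  exact ((isRSIntegral_rsIntegral hab (hf.mono hsub₁) (hk.mono hsub₁)).eq_add_of_adjacent hab hbc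
    (isRSIntegral_rsIntegral hbc (hf.mono hsub₂) (hk.mono hsub₂))
    (isRSIntegral_rsIntegral (hab.trans hbc) hf hk)).symm

end RiemannStieltjes

theorem map_setAverage_le_of_convex_epigraph {α E : Type*} [MeasurableSpace α] {μ : Measure α}
    [NormedAddCommGroup E] [NormedSpace ℝ E] [CompleteSpace E] {φ : E → EReal} {y : α → E}
    {s : Set α} (hbot : ∀ v, φ v ≠ ⊥) (hconv : Convex ℝ {p : E × ℝ | φ p.1 ≤ (p.2 : EReal)})
    (hlsc : LowerSemicontinuous φ) (hs : MeasurableSet s) (hμ₀ : μ s ≠ 0) (hμ : μ s ≠ ⊤)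
    (hy : IntegrableOn y s μ) (hfin : ∀ r ∈ s, φ (y r) ≠ ⊤)
    (hφy : IntegrableOn (fun r => (φ (y r)).toReal) s μ) :
    φ (⨍ r in s, y r ∂μ) ≤ ((⨍ r in s, (φ (y r)).toReal ∂μ : ℝ) : EReal) := by
  have hclosed : IsClosed {p : E × ℝ | φ p.1 ≤ (p.2 : EReal)} :=
    hlsc.isClosed_epigraph.preimage (continuous_fst.prodMk (continuous_coe_real_ereal.comp
      continuous_snd))
  have hmem := hconv.set_average_mem hclosed hμ₀ hμ
    ((ae_restrict_iff' hs).2 (ae_of_all _ fun r hr => (EReal.coe_toReal (hfin r hr) (hbot _)).ge))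
    (hy.prodMk hφy)
  rwa [average_pair hy hφy] at hmem

theorem ERealIntegral_const {c : EReal} {s t : ℝ} (hc : c ≠ ⊥) (hst : s < t) :
    ERealIntegral (fun _ => c) s t = ((t - s : ℝ) : EReal) * c := by
  by_cases htop : c = ⊤
  · rw [ERealIntegral, if_neg fun h => h.1 s (left_mem_Icc.2 hst.le) htop, htop,
      EReal.coe_mul_top_of_pos (sub_pos.2 hst)]
  · rw [ERealIntegral, if_pos ⟨fun _ _ => htop, integrableOn_const measure_Icc_lt_top.ne⟩,
      intervalIntegral.integral_const, smul_eq_mul, EReal.coe_mul, EReal.coe_toReal htop hc]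

theorem coe_add_integral_le_mul_of_le_ERealIntegral {H : Type*} [NormedAddCommGroup H]
    [InnerProductSpace ℝ H] {f k : ℝ → H} {g : ℝ → ℝ} {c : EReal} {s t I : ℝ} (hc : c ≠ ⊥)
    (hst : s ≤ t) (hI : IsRSIntegral f k s t I)
    (h : ((I + ∫ r in s..t, g r : ℝ) : EReal) ≤ ERealIntegral (fun _ => c) s t) :
    ((I + ∫ r in s..t, g r : ℝ) : EReal) ≤ ((t - s : ℝ) : EReal) * c := by
  rcases hst.eq_or_lt with rfl | hst
  · simp [hI.eq_zero_of_self]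
  · rwa [ERealIntegral_const hc hst] at h

theorem nonpos_of_additive_of_locally_nonpos {F : ℝ → ℝ → ℝ} {s t δ : ℝ} (hδ : 0 < δ)
    (hst : s ≤ t) (hadd : ∀ a b c, s ≤ a → a ≤ b → b ≤ c → c ≤ t → F a c = F a b + F b c)
    (hloc : ∀ a b, s ≤ a → a < b → b ≤ t → b - a < δ → F a b ≤ 0) : F s t ≤ 0 := by
  have hself : ∀ a, s ≤ a → a ≤ t → F a a = 0 := fun a hsa hat => by
    linarith [hadd a a a hsa le_rfl le_rfl hat]
  have key : ∀ n : ℕ, ∀ a, s ≤ a → a ≤ t → t - a ≤ n * (δ / 2) → F a t ≤ 0 := by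
    intro n
    induction n with
    | zero =>
      intro a hsa hat h
      obtain rfl : a = t := by push_cast at h; linarith
      exact (hself a hsa hat).le
    | succ n ih =>
      intro a hsa hat h
      rcases hat.eq_or_lt with rfl | hat
      · exact (hself a hsa le_rfl).le
      set b := min (a + δ / 2) t
      have hab : a < b := lt_min (by linarith) hat
      have hbt : b ≤ t := min_le_right _ _
      rw [hadd a b t hsa hab.le hbt le_rfl]
      refine add_nonpos (hloc a b hsa hab hbt (by linarith [min_le_left (a + δ / 2) t])) ?_
      refine ih b (hsa.trans hab.le) hbt ?_
      push_cast at h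
      change t - min (a + δ / 2) t ≤ _
      rcases min_cases (a + δ / 2) t with ⟨hb, -⟩ | ⟨hb, -⟩ <;> rw [hb]
      · linarith
      · have : (0 : ℝ) ≤ n * (δ / 2) := by positivity
        linarith
  obtain ⟨n, hn⟩ := exists_nat_ge ((t - s) / (δ / 2))
  exact key n s le_rfl hst (by rwa [div_le_iff₀ (half_pos hδ)] at hn)

section SubdifferentialInequality

variable {H : Type*} [NormedAddCommGroup H] [InnerProductSpace ℝ H] [CompleteSpace H]
  {φ : H → EReal} {x k y : ℝ → H} {a b s t ε I : ℝ}

theorem mul_map_intervalAverage_le (hbot : ∀ v, φ v ≠ ⊥)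
    (hconv : Convex ℝ {p : H × ℝ | φ p.1 ≤ (p.2 : EReal)}) (hlsc : LowerSemicontinuous φ)
    (hab : a < b) (hy : ContinuousOn y (Icc a b)) (hfin : ∀ r ∈ Icc a b, φ (y r) ≠ ⊤)
    (hφy : IntegrableOn (fun r => (φ (y r)).toReal) (Icc a b)) :
    ((b - a : ℝ) : EReal) * φ (⨍ r in a..b, y r)
      ≤ ((∫ r in a..b, (φ (y r)).toReal : ℝ) : EReal) := by
  have h := map_setAverage_le_of_convex_epigraph hbot hconv hlsc measurableSet_uIoc
    (by simp [uIoc_of_le hab.le, hab]) (by simp [uIoc_of_le hab.le])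
    ((hy.integrableOn_Icc).mono_set (uIoc_of_le hab.le ▸ Ioc_subset_Icc_self))
    (fun r hr => hfin r (Ioc_subset_Icc_self (uIoc_of_le hab.le ▸ hr)))
    (hφy.mono_set (uIoc_of_le hab.le ▸ Ioc_subset_Icc_self))
  have hba : (0 : ℝ) < b - a := sub_pos.2 hab
  calc ((b - a : ℝ) : EReal) * φ (⨍ r in a..b, y r)
      ≤ ((b - a : ℝ) : EReal) * ((⨍ r in a..b, (φ (y r)).toReal : ℝ) : EReal) :=
        mul_le_mul_of_nonneg_left h (EReal.coe_nonneg.2 hba.le)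
    _ = ((∫ r in a..b, (φ (y r)).toReal : ℝ) : EReal) := by
        rw [← EReal.coe_mul, interval_average_eq, smul_eq_mul, ← mul_assoc,
          mul_inv_cancel₀ hba.ne', one_mul]

theorem add_integral_le_integral_add_of_norm_sub_le (hbot : ∀ v, φ v ≠ ⊥)
    (hconv : Convex ℝ {p : H × ℝ | φ p.1 ≤ (p.2 : EReal)}) (hlsc : LowerSemicontinuous φ)
    (hab : a < b) (hx : ContinuousOn x (Icc a b)) (hk : BoundedVariationOn k (Icc a b))
    (hb : ∀ z J, IsRSIntegral (fun r => z - x r) k a b J →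
      ((J + ∫ r in a..b, (φ (x r)).toReal : ℝ) : EReal) ≤ ((b - a : ℝ) : EReal) * φ z)
    (hy : ContinuousOn y (Icc a b)) (hyε : ∀ u ∈ Icc a b, ∀ v ∈ Icc a b, ‖y u - y v‖ ≤ ε)
    (hfin : ∀ r ∈ Icc a b, φ (y r) ≠ ⊤) (hφy : IntegrableOn (fun r => (φ (y r)).toReal) (Icc a b))
    {K : ℝ} (hK : IsRSIntegral (fun r => y r - x r) k a b K) :
    K + ∫ r in a..b, (φ (x r)).toReal
      ≤ (∫ r in a..b, (φ (y r)).toReal) + ε * (eVariationOn k (Icc a b)).toReal := by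
  set z := ⨍ r in a..b, y r
  have hz : ∀ u ∈ Icc a b, ‖z - y u‖ ≤ ε := fun u hu => by
    have := (convex_closedBall (y u) ε).set_average_mem (μ := volume) Metric.isClosed_closedBall
      (by simp [uIoc_of_le hab.le, hab]) (by simp [uIoc_of_le hab.le])
      ((ae_restrict_iff' measurableSet_uIoc).2 (ae_of_all _ fun r hr =>
        mem_closedBall_iff_norm.2 (hyε r (Ioc_subset_Icc_self (uIoc_of_le hab.le ▸ hr)) u hu)))
      ((hy.integrableOn_Icc).mono_set (uIoc_of_le hab.le ▸ Ioc_subset_Icc_self))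
    exact mem_closedBall_iff_norm.1 this
  obtain ⟨J, hJ⟩ := exists_isRSIntegral (f := fun r => z - x r) hab.le
    (continuousOn_const.sub hx) hk
  have hJK : |J - K| ≤ ε * (eVariationOn k (Icc a b)).toReal :=
    hJ.abs_sub_le hab.le hk (fun u hu => by rw [sub_sub_sub_cancel_right]; exact hz u hu) hK
  have hJ' : J + ∫ r in a..b, (φ (x r)).toReal ≤ ∫ r in a..b, (φ (y r)).toReal :=
    EReal.coe_le_coe_iff.1 <| (hb z J hJ).trans
      (mul_map_intervalAverage_le hbot hconv hlsc hab hy hfin hφy)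
  linarith [(abs_le.1 hJK).1]

theorem rsIntegral_add_integral_le_integral_add (hbot : ∀ v, φ v ≠ ⊥)
    (hconv : Convex ℝ {p : H × ℝ | φ p.1 ≤ (p.2 : EReal)}) (hlsc : LowerSemicontinuous φ)
    (hst : s ≤ t) (hx : ContinuousOn x (Icc s t)) (hk : BoundedVariationOn k (Icc s t))
    (hφx : IntegrableOn (fun r => (φ (x r)).toReal) (Icc s t))
    (hb : ∀ z a b, s ≤ a → a ≤ b → b ≤ t → ∀ J, IsRSIntegral (fun r => z - x r) k a b J →
      ((J + ∫ r in a..b, (φ (x r)).toReal : ℝ) : EReal) ≤ ((b - a : ℝ) : EReal) * φ z)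
    (hy : ContinuousOn y (Icc s t)) (hfin : ∀ r ∈ Icc s t, φ (y r) ≠ ⊤)
    (hφy : IntegrableOn (fun r => (φ (y r)).toReal) (Icc s t)) (hε : 0 < ε) :
    rsIntegral (fun r => y r - x r) k s t + ∫ r in s..t, (φ (x r)).toReal
      ≤ (∫ r in s..t, (φ (y r)).toReal) + ε * variationOnFromTo k (Icc s t) s t := by
  obtain ⟨δ, hδ, hyδ⟩ :=
    Metric.uniformContinuousOn_iff.1 (isCompact_Icc.uniformContinuousOn_of_continuous hy) ε hε
  have hint : ∀ {g : ℝ → ℝ}, IntegrableOn g (Icc s t) → ∀ {a b}, s ≤ a → a ≤ b → b ≤ t →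
      IntervalIntegrable g volume a b := fun hg _ _ hsa hab hbt =>
    (intervalIntegrable_iff_integrableOn_Icc_of_le hab).2 (hg.mono_set (Icc_subset_Icc hsa hbt))
  let F a b := rsIntegral (fun r => y r - x r) k a b + (∫ r in a..b, (φ (x r)).toReal)
    - (∫ r in a..b, (φ (y r)).toReal) - ε * variationOnFromTo k (Icc s t) a b
  suffices F s t ≤ 0 by linarith
  refine nonpos_of_additive_of_locally_nonpos hδ hst (fun a b c hsa hab hbc hct => ?_)
    fun a b hsa hab hbt hba => ?_
  · have hac := Icc_subset_Icc hsa hct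
    have hmem : ∀ {u}, a ≤ u → u ≤ c → u ∈ Icc s t := fun hau huc => ⟨hsa.trans hau, huc.trans hct⟩
    simp only [F]
    rw [← rsIntegral_add_adjacent_intervals (f := fun r => y r - x r) hab hbc
        ((hy.sub hx).mono hac) (hk.mono hac),
      ← intervalIntegral.integral_add_adjacent_intervals (hint hφx hsa hab (hbc.trans hct))
        (hint hφx (hsa.trans hab) hbc hct),
      ← intervalIntegral.integral_add_adjacent_intervals (hint hφy hsa hab (hbc.trans hct))
        (hint hφy (hsa.trans hab) hbc hct),
      ← variationOnFromTo.add hk.locallyBoundedVariationOn (hmem le_rfl (hab.trans hbc))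
        (hmem hab hbc) (hmem (hab.trans hbc) le_rfl)]
    ring
  · have hsub := Icc_subset_Icc hsa hbt
    have hyε : ∀ u ∈ Icc a b, ∀ v ∈ Icc a b, ‖y u - y v‖ ≤ ε := fun u hu v hv => by
      rw [← dist_eq_norm]
      exact (hyδ u (hsub hu) v (hsub hv) ((Real.dist_le_of_mem_Icc hu hv).trans_lt hba)).le
    have := add_integral_le_integral_add_of_norm_sub_le hbot hconv hlsc hab (hx.mono hsub)
      (hk.mono hsub) (fun z J hJ => hb z a b hsa hab.le hbt J hJ) (hy.mono hsub) hyε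
      (fun r hr => hfin r (hsub hr)) (hφy.mono_set hsub)
      (isRSIntegral_rsIntegral hab.le ((hy.sub hx).mono hsub) (hk.mono hsub))
    simp only [F]
    rw [variationOnFromTo.eq_of_le _ _ hab.le, inter_eq_right.2 hsub]
    linarith

theorem coe_add_integral_le_ERealIntegral (hbot : ∀ v, φ v ≠ ⊥)
    (hconv : Convex ℝ {p : H × ℝ | φ p.1 ≤ (p.2 : EReal)}) (hlsc : LowerSemicontinuous φ)
    (hst : s ≤ t) (hx : ContinuousOn x (Icc s t)) (hk : BoundedVariationOn k (Icc s t))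
    (hφx : IntegrableOn (fun r => (φ (x r)).toReal) (Icc s t))
    (hb : ∀ z a b, s ≤ a → a ≤ b → b ≤ t → ∀ J, IsRSIntegral (fun r => z - x r) k a b J →
      ((J + ∫ r in a..b, (φ (x r)).toReal : ℝ) : EReal) ≤ ((b - a : ℝ) : EReal) * φ z)
    (hy : ContinuousOn y (Icc s t)) (hI : IsRSIntegral (fun r => y r - x r) k s t I) :
    ((I + ∫ r in s..t, (φ (x r)).toReal : ℝ) : EReal) ≤ ERealIntegral (fun r => φ (y r)) s t := by
  rw [ERealIntegral]
  split_ifs with hyt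
  swap
  · exact le_top
  rw [EReal.coe_le_coe_iff, hI.unique hst (isRSIntegral_rsIntegral hst (hy.sub hx) hk)]
  set V := variationOnFromTo k (Icc s t) s t
  have hV : 0 ≤ V := variationOnFromTo.nonneg_of_le _ _ hst
  refine le_of_forall_pos_le_add fun ε hε => ?_
  have h := rsIntegral_add_integral_le_integral_add hbot hconv hlsc hst hx hk hφx hb hy hyt.1 hyt.2
    (show 0 < ε / (V + 1) by positivity)
  have : ε / (V + 1) * V ≤ ε := by
    rw [div_mul_eq_mul_div, div_le_iff₀ (by positivity)]
    nlinarith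
  linarith

end SubdifferentialInequality

theorem subdifferential_inequality_continuous_iff_const_general
    {d : ℕ} (φ : EuclideanSpace ℝ (Fin d) → EReal)
    (hbot : ∀ v, φ v ≠ ⊥)
    (hconv : Convex ℝ {p : EuclideanSpace ℝ (Fin d) × ℝ | φ p.1 ≤ ((p.2 : ℝ) : EReal)})
    (hlsc : LowerSemicontinuous φ)
    (T : ℝ)
    (x k : ℝ → EuclideanSpace ℝ (Fin d))
    (hx : ContinuousOn x (Set.Icc 0 T))
    (hkbv : BoundedVariationOn k (Set.Icc 0 T))
    (hL1 : IntegrableOn (fun t => (φ (x t)).toReal) (Set.Icc 0 T)) :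
    (∀ y : ℝ → EuclideanSpace ℝ (Fin d), Continuous y →
      ∀ s t : ℝ, 0 ≤ s → s ≤ t → t ≤ T →
      ∀ I : ℝ, IsRSIntegral (fun r => y r - x r) k s t I →
        (((I + ∫ r in s..t, (φ (x r)).toReal) : ℝ) : EReal)
          ≤ ERealIntegral (fun r => φ (y r)) s t) ↔
    (∀ z : EuclideanSpace ℝ (Fin d),
      ∀ s t : ℝ, 0 ≤ s → s ≤ t → t ≤ T →
      ∀ I : ℝ, IsRSIntegral (fun r => z - x r) k s t I →
        (((I + ∫ r in s..t, (φ (x r)).toReal) : ℝ) : EReal)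
          ≤ (((t - s : ℝ)) : EReal) * φ z) := by
  refine ⟨fun ha z s t hs hst htT I hI => ?_, fun hb y hy s t hs hst htT I hI => ?_⟩
  · exact coe_add_integral_le_mul_of_le_ERealIntegral (hbot z) hst hI
      (ha (fun _ => z) continuous_const s t hs hst htT I hI)
  · have hsub : Icc s t ⊆ Icc 0 T := Icc_subset_Icc hs htT
    exact coe_add_integral_le_ERealIntegral hbot hconv hlsc hst (hx.mono hsub) (hkbv.mono hsub)
      (hL1.mono_set hsub) (fun z a b hsa hab hbt => hb z a b (hs.trans hsa) hab (hbt.trans htT))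
      hy.continuousOn hI

/-- For a proper convex l.s.c. `φ`, a continuous `x` and a BV `k` with `k 0 = 0` and
`φ ∘ x ∈ L¹(0,T)`, the subdifferential inequality tested against all continuous
functions `y` is equivalent to the one tested against all constants `z`. -/
theorem subdifferential_inequality_continuous_iff_const
    {d : ℕ} (φ : EuclideanSpace ℝ (Fin d) → EReal)
    (hbot : ∀ v, φ v ≠ ⊥) (hproper : ∃ v, φ v ≠ ⊤)
    (hconv : Convex ℝ {p : EuclideanSpace ℝ (Fin d) × ℝ | φ p.1 ≤ ((p.2 : ℝ) : EReal)})
    (hlsc : LowerSemicontinuous φ)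
    (T : ℝ) (hT : 0 ≤ T)
    (x k : ℝ → EuclideanSpace ℝ (Fin d))
    (hx : ContinuousOn x (Set.Icc 0 T))
    (hkcont : ContinuousOn k (Set.Icc 0 T))
    (hkbv : BoundedVariationOn k (Set.Icc 0 T)) (hk0 : k 0 = 0)
    (hfin : ∀ t ∈ Set.Icc 0 T, φ (x t) ≠ ⊤)
    (hL1 : IntegrableOn (fun t => (φ (x t)).toReal) (Set.Icc 0 T)) :
    (∀ y : ℝ → EuclideanSpace ℝ (Fin d), Continuous y →
      ∀ s t : ℝ, 0 ≤ s → s ≤ t → t ≤ T →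
      ∀ I : ℝ, IsRSIntegral (fun r => y r - x r) k s t I →
        (((I + ∫ r in s..t, (φ (x r)).toReal) : ℝ) : EReal)
          ≤ ERealIntegral (fun r => φ (y r)) s t) ↔
    (∀ z : EuclideanSpace ℝ (Fin d),
      ∀ s t : ℝ, 0 ≤ s → s ≤ t → t ≤ T →
      ∀ I : ℝ, IsRSIntegral (fun r => z - x r) k s t I →
        (((I + ∫ r in s..t, (φ (x r)).toReal) : ℝ) : EReal)
          ≤ (((t - s : ℝ)) : EReal) * φ z) :=
  subdifferential_inequality_continuous_iff_const_general φ hbot hconv hlsc T x k hx hkbv hL1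
end
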